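/- arXiv:1210.5363 — 7 statements merged into one kernel-verified Lean document; each statement's English description precedes it below -/
import Mathlib

section
/- Let W = (W_1, …, W_r) be a path decomposition of a finite digraph T of width at most p in which no two consecutive bags are equal. Define (A_i, B_i) = (W_1 ∪ … ∪ W_i, W_{i+1} ∪ … ∪ W_r) for 0 ≤ i ≤ r. Then the sequence ((A_0,B_0), …, (A_r,B_r)) is a separation chain of T of width at most p. -/
/-- A digraph (given by its arc relation) is semi-complete if it is simple (no loops;
multiple arcs are impossible in this encoding) and any two distinct vertices are
joined by an arc in at least one direction. -/
def SemiComplete {V : Type*} (E : V → V → Prop) : Prop :=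
  (∀ v, ¬ E v v) ∧ ∀ v w : V, v ≠ w → E v w ∨ E w v

/-- The outdegree of a vertex: the number of its outneighbours. -/
noncomputable def outdeg {V : Type*} (E : V → V → Prop) (v : V) : ℕ :=
  {w | E v w}.ncard

/-- A directed path, encoded as a nonempty list of pairwise distinct vertices in which
consecutive vertices are joined by arcs. -/
def IsDipath {V : Type*} (E : V → V → Prop) (p : List V) : Prop :=
  p ≠ [] ∧ p.Nodup ∧ p.Chain' E

/-- A directed path from `v` to `w`. -/
def PathFrom {V : Type*} (E : V → V → Prop) (v w : V) (p : List V) : Prop :=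
  IsDipath E p ∧ p.head? = some v ∧ p.getLast? = some w

/-- The length of a path (its number of arcs). -/
def pathLen {V : Type*} (p : List V) : ℕ := p.length - 1

/-- The internal vertices of a path: all vertices except the first and the last one. -/
def internals {V : Type*} (p : List V) : List V := (p.drop 1).dropLast

/-- The arcs of a path. -/
def arcsOf {V : Type*} (p : List V) : List (V × V) := p.zip (p.drop 1)

/-- A `(k,d)`-short jungle: a set `X` of at least `k` vertices such that for every ordered
pair of distinct vertices `v, w ∈ X` there are `k` pairwise distinct paths from `v` to `w`,
each of length at most `d`, that are pairwise internally vertex-disjoint. -/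
def ShortJungle {V : Type*} (E : V → V → Prop) (k d : ℕ) (X : Set V) : Prop :=
  k ≤ X.ncard ∧ ∀ v ∈ X, ∀ w ∈ X, v ≠ w →
    ∃ P : Fin k → List V, Function.Injective P ∧
      (∀ i, PathFrom E v w (P i) ∧ pathLen (P i) ≤ d) ∧
      (∀ i j, i ≠ j → ∀ z ∈ internals (P i), z ∉ internals (P j))

/-- A `(k,d)`-short immersion jungle: as a short jungle, but with the `k` paths required
to be pairwise arc-disjoint instead of internally vertex-disjoint. -/
def ShortImmersionJungle {V : Type*} (E : V → V → Prop) (k d : ℕ) (X : Set V) : Prop :=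
  k ≤ X.ncard ∧ ∀ v ∈ X, ∀ w ∈ X, v ≠ w →
    ∃ P : Fin k → List V, Function.Injective P ∧
      (∀ i, PathFrom E v w (P i) ∧ pathLen (P i) ≤ d) ∧
      (∀ i j, i ≠ j → ∀ a ∈ arcsOf (P i), a ∉ arcsOf (P j))

/-- `H` (arc relation `Eh`) is topologically contained in `G` (arc relation `Eg`):
there is an injective map `η` on vertices and, for every arc `(u,v)` of `H`, a directed
path in `G` from `η u` to `η v`, these paths being pairwise internally vertex-disjoint
with no internal vertex in the image of `η`. -/
def TopContain {W V : Type*} (Eh : W → W → Prop) (Eg : V → V → Prop) : Prop :=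
  ∃ (η : W → V) (P : W → W → List V), Function.Injective η ∧
    (∀ u v : W, Eh u v → PathFrom Eg (η u) (η v) (P u v)) ∧
    (∀ u v : W, Eh u v → ∀ z ∈ internals (P u v), z ∉ Set.range η) ∧
    (∀ u v u' v' : W, Eh u v → Eh u' v' → (u, v) ≠ (u', v') →
      ∀ z ∈ internals (P u v), z ∉ internals (P u' v'))

/-- `H` (arc relation `Eh`) is immersed in `G` (arc relation `Eg`): there is an injective
map `η` on vertices and, for every arc `(u,v)` of `H`, a directed path in `G` from `η u`
to `η v`, these paths being pairwise arc-disjoint. -/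
def Immerses {W V : Type*} (Eh : W → W → Prop) (Eg : V → V → Prop) : Prop :=
  ∃ (η : W → V) (P : W → W → List V), Function.Injective η ∧
    (∀ u v : W, Eh u v → PathFrom Eg (η u) (η v) (P u v)) ∧
    (∀ u v u' v' : W, Eh u v → Eh u' v' → (u, v) ≠ (u', v') →
      ∀ a ∈ arcsOf (P u v), a ∉ arcsOf (P u' v'))

/-- A path decomposition of the digraph with arc relation `E`, with bags `Bs 0, …, Bs (r-1)`. -/
def IsPathDecomp {V : Type*} {r : ℕ} (E : V → V → Prop) (Bs : Fin r → Set V) : Prop :=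
  (⋃ i, Bs i) = Set.univ ∧
  (∀ i j l : Fin r, i < j → j < l → Bs i ∩ Bs l ⊆ Bs j) ∧
  (∀ u v : V, E u v →
    (∃ i, u ∈ Bs i ∧ v ∈ Bs i) ∨ ∃ i j : Fin r, j < i ∧ u ∈ Bs i ∧ v ∈ Bs j)

/-- The pathwidth of a digraph: the least `p` admitting a path decomposition all of whose
bags have size at most `p + 1`. -/
noncomputable def pathwidth {V : Type*} (E : V → V → Prop) : ℕ :=
  sInf {p | ∃ (r : ℕ) (Bs : Fin r → Set V), IsPathDecomp E Bs ∧ ∀ i, (Bs i).ncard - 1 ≤ p}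

/-- A separation of a digraph: a pair `(A,B)` covering all vertices with no arc from
`A \ B` to `B \ A`. -/
def IsSeparation {V : Type*} (E : V → V → Prop) (A B : Set V) : Prop :=
  A ∪ B = Set.univ ∧ ∀ v ∈ A \ B, ∀ w ∈ B \ A, ¬ E v w

/-- A separation chain `((A 0, B 0), …, (A r, B r))`. -/
def IsSepChain {V : Type*} {r : ℕ} (E : V → V → Prop) (A B : Fin (r + 1) → Set V) : Prop :=
  A 0 = ∅ ∧ B 0 = Set.univ ∧ A (Fin.last r) = Set.univ ∧ B (Fin.last r) = ∅ ∧
  (∀ i, IsSeparation E (A i) (B i)) ∧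
  (∀ i j : Fin (r + 1), i ≤ j → A i ⊆ A j ∧ B j ⊆ B i)

/-- A `(k,ℓ)`-degree tangle: at least `k` vertices whose outdegrees pairwise differ
by at most `ℓ`. -/
def DegreeTangle {V : Type*} (E : V → V → Prop) (k ℓ : ℕ) (X : Set V) : Prop :=
  k ≤ X.ncard ∧ ∀ v ∈ X, ∀ w ∈ X, outdeg E v ≤ outdeg E w + ℓ

/-- A `(k,ℓ)`-matching tangle: disjoint sets `X`, `Y` of size `k` with a matching from `X`
to `Y`, where every vertex of `Y` has outdegree more than `ℓ` larger than every vertex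
of `X`. -/
def MatchingTangle {V : Type*} (E : V → V → Prop) (k ℓ : ℕ) (X Y : Set V) : Prop :=
  Disjoint X Y ∧ X.ncard = k ∧ Y.ncard = k ∧
  (∃ f : V → V, Set.BijOn f X Y ∧ ∀ v ∈ X, E v (f v)) ∧
  (∀ v ∈ X, ∀ w ∈ Y, outdeg E v + ℓ < outdeg E w)

/-- A `k`-backward tangle: a partition `(X,Y)` of the vertex set with at least `k` arcs
from `X` to `Y`, and every outdegree in `Y` at least every outdegree in `X`. -/
def BackwardTangle {V : Type*} (E : V → V → Prop) (k : ℕ) (X Y : Set V) : Prop :=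
  X ∪ Y = Set.univ ∧ Disjoint X Y ∧
  k ≤ {p : V × V | p.1 ∈ X ∧ p.2 ∈ Y ∧ E p.1 p.2}.ncard ∧
  (∀ v ∈ X, ∀ w ∈ Y, outdeg E v ≤ outdeg E w)

/-- The width of an ordering of the vertices (given as a bijection from `Fin n`):
the maximum, over prefixes, of the number of arcs leaving the prefix forward. -/
noncomputable def orderWidth {V : Type*} [Fintype V] (E : V → V → Prop)
    (e : Fin (Fintype.card V) ≃ V) : ℕ :=
  ⨆ α : Fin (Fintype.card V + 1),
    {p : V × V | ((e.symm p.1 : ℕ) < (α : ℕ)) ∧ ¬ ((e.symm p.2 : ℕ) < (α : ℕ)) ∧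
      E p.1 p.2}.ncard

/-- The cutwidth of a digraph: the minimum width over all orderings of the vertices. -/
noncomputable def cutwidth {V : Type*} [Fintype V] (E : V → V → Prop) : ℕ :=
  ⨅ e : Fin (Fintype.card V) ≃ V, orderWidth E e

/-- `(X,Y)` is a bipartition of the simple graph `G`. -/
def IsBipartition {V : Type*} (G : SimpleGraph V) (X Y : Set V) : Prop :=
  X ∪ Y = Set.univ ∧ Disjoint X Y ∧
  ∀ u v : V, G.Adj u v → (u ∈ X ∧ v ∈ Y) ∨ (u ∈ Y ∧ v ∈ X)

/-- A matching of `G`: a set of edges of `G` that are pairwise vertex-disjoint. -/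
def IsMatching {V : Type*} (G : SimpleGraph V) (M : Set (Sym2 V)) : Prop :=
  M ⊆ G.edgeSet ∧ ∀ e ∈ M, ∀ f ∈ M, e ≠ f → ∀ v : V, v ∈ e → v ∉ f

/-- A maximum matching of `G`. -/
def IsMaxMatching {V : Type*} [Fintype V] (G : SimpleGraph V) (M : Set (Sym2 V)) : Prop :=
  IsMatching G M ∧ ∀ N : Set (Sym2 V), IsMatching G N → N.ncard ≤ M.ncard

/-- A vertex is covered by a matching if it is an endpoint of one of its edges. -/
def CoveredBy {V : Type*} (M : Set (Sym2 V)) (v : V) : Prop := ∃ e ∈ M, v ∈ e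

/-- A vertex is covered by every maximum matching of `G`. -/
def CoveredByAllMax {V : Type*} [Fintype V] (G : SimpleGraph V) (v : V) : Prop :=
  ∀ M : Set (Sym2 V), IsMaxMatching G M → CoveredBy M v

/-- Deletion of the vertex `w` from a simple graph (keeping the vertex type). -/
def deleteVert {V : Type*} (G : SimpleGraph V) (w : V) : SimpleGraph V where
  Adj x y := G.Adj x y ∧ x ≠ w ∧ y ≠ w
  symm := ⟨fun _ _ h => ⟨h.1.symm, h.2.2, h.2.1⟩⟩
  loopless := ⟨fun x h => G.loopless.irrefl x h.1⟩

/-- An `M`-alternating path from `u` to `v`: a (possibly trivial) path starting at `u` and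
ending at `v` whose edges alternate between non-matching and matching edges, beginning
with a non-matching edge. -/
def AltPathFrom {V : Type*} (G : SimpleGraph V) (M : Set (Sym2 V)) (u v : V) : Prop :=
  ∃ p : List V, p ≠ [] ∧ p.Nodup ∧ p.Chain' G.Adj ∧
    p.head? = some u ∧ p.getLast? = some v ∧
    ∀ i : ℕ, (h : i + 1 < p.length) →
      (s(p.get ⟨i, Nat.lt_of_succ_lt h⟩, p.get ⟨i + 1, h⟩) ∈ M ↔ i % 2 = 1)

/-!
Cutting the sequence of bags between positions `k - 1` and `k` gives a separation: an arc
lies within a bag or goes backwards, so no arc leads from a vertex occurring only in bags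
before `k` to one occurring only in bags from `k` on. By the interpolation property a
vertex on both sides of the cut lies in `W_{k-1} ∩ W_k`, and since these two bags differ
their intersection is a proper subset of one of them, hence has at most `p` elements.
-/

section BagUnions

variable {V : Type*} {r : ℕ} (Bs : Fin r → Set V)

def bagsBefore (k : ℕ) : Set V := ⋃ (j : Fin r) (_ : (j : ℕ) < k), Bs j

def bagsFrom (k : ℕ) : Set V := ⋃ (j : Fin r) (_ : k ≤ (j : ℕ)), Bs j

variable {Bs}

@[simp]
lemma mem_bagsBefore {x : V} {k : ℕ} :
    x ∈ bagsBefore Bs k ↔ ∃ j : Fin r, (j : ℕ) < k ∧ x ∈ Bs j := by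
  simp [bagsBefore]

@[simp]
lemma mem_bagsFrom {x : V} {k : ℕ} :
    x ∈ bagsFrom Bs k ↔ ∃ j : Fin r, k ≤ (j : ℕ) ∧ x ∈ Bs j := by
  simp [bagsFrom]

lemma bagsBefore_zero : bagsBefore Bs 0 = ∅ := by
  simp [bagsBefore]

lemma bagsFrom_of_le {k : ℕ} (hk : r ≤ k) : bagsFrom Bs k = ∅ := by
  ext x
  simp only [mem_bagsFrom, Set.mem_empty_iff_false, iff_false, not_exists, not_and]
  intro j hj
  exact absurd j.isLt (by omega)

lemma bagsBefore_mono : Monotone (bagsBefore Bs) := by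
  intro k l hkl x
  simp only [mem_bagsBefore]
  exact fun ⟨j, hj, hx⟩ => ⟨j, hj.trans_le hkl, hx⟩

lemma bagsFrom_antitone : Antitone (bagsFrom Bs) := by
  intro k l hkl x
  simp only [mem_bagsFrom]
  exact fun ⟨j, hj, hx⟩ => ⟨j, hkl.trans hj, hx⟩

lemma bagsBefore_union_bagsFrom (hcover : (⋃ i, Bs i) = Set.univ) (k : ℕ) :
    bagsBefore Bs k ∪ bagsFrom Bs k = Set.univ := by
  refine Set.eq_univ_of_forall fun x => ?_
  obtain ⟨j, hj⟩ := Set.mem_iUnion.mp (hcover ▸ Set.mem_univ x : x ∈ ⋃ i, Bs i)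
  rcases lt_or_ge (j : ℕ) k with h | h
  · exact Or.inl (mem_bagsBefore.mpr ⟨j, h, hj⟩)
  · exact Or.inr (mem_bagsFrom.mpr ⟨j, h, hj⟩)

lemma bagsFrom_zero (hcover : (⋃ i, Bs i) = Set.univ) : bagsFrom Bs 0 = Set.univ := by
  simpa [bagsBefore_zero] using bagsBefore_union_bagsFrom hcover 0

lemma bagsBefore_of_le (hcover : (⋃ i, Bs i) = Set.univ) {k : ℕ} (hk : r ≤ k) :
    bagsBefore Bs k = Set.univ := by
  simpa [bagsFrom_of_le hk] using bagsBefore_union_bagsFrom hcover k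

lemma bagsBefore_inter_bagsFrom_subset
    (hinterp : ∀ i j l : Fin r, i < j → j < l → Bs i ∩ Bs l ⊆ Bs j)
    {i j : Fin r} (hij : (j : ℕ) = i + 1) :
    bagsBefore Bs j ∩ bagsFrom Bs j ⊆ Bs i ∩ Bs j := by
  rintro x ⟨hxA, hxB⟩
  obtain ⟨a, ha, hxa⟩ := mem_bagsBefore.mp hxA
  obtain ⟨b, hb, hxb⟩ := mem_bagsFrom.mp hxB
  have mem_between : ∀ m : Fin r, a ≤ m → m ≤ b → x ∈ Bs m := by
    intro m ham hmb
    rcases ham.eq_or_lt with rfl | ham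
    · exact hxa
    rcases hmb.eq_or_lt with rfl | hmb
    · exact hxb
    exact hinterp a m b ham hmb ⟨hxa, hxb⟩
  exact ⟨mem_between i (Fin.le_def.mpr (by omega)) (Fin.le_def.mpr (by omega)),
    mem_between j (Fin.le_def.mpr (by omega)) (Fin.le_def.mpr hb)⟩

end BagUnions

lemma Set.ncard_inter_le_of_ne {α : Type*} {s t : Set α} {p : ℕ}
    (hs : s.Finite) (ht : t.Finite) (hst : s ≠ t)
    (hsp : s.ncard - 1 ≤ p) (htp : t.ncard - 1 ≤ p) : (s ∩ t).ncard ≤ p := by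
  by_cases hsub : s ⊆ t
  · have hlt := Set.ncard_lt_ncard (Set.inter_ssubset_right_iff.mpr
      fun hts => hst (hsub.antisymm hts)) ht
    omega
  · have hlt := Set.ncard_lt_ncard (Set.inter_ssubset_left_iff.mpr hsub) hs
    omega

section PathDecomposition

variable {V : Type*} {E : V → V → Prop} {r : ℕ} {Bs : Fin r → Set V}

lemma IsPathDecomp.isSeparation_bagsBefore_bagsFrom (hW : IsPathDecomp E Bs) (k : ℕ) :
    IsSeparation E (bagsBefore Bs k) (bagsFrom Bs k) := by
  obtain ⟨hcover, -, harcs⟩ := hW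
  refine ⟨bagsBefore_union_bagsFrom hcover k, ?_⟩
  rintro v ⟨-, hvB⟩ w ⟨-, hwA⟩ hvw
  simp only [mem_bagsBefore, mem_bagsFrom, not_exists, not_and] at hvB hwA
  rcases harcs v w hvw with ⟨i, hvi, hwi⟩ | ⟨i, j, hji, hvi, hwj⟩
  · exact hwA i (lt_of_not_ge fun h => hvB i h hvi) hwi
  · exact hwA j ((Fin.lt_def.mp hji).trans (lt_of_not_ge fun h => hvB i h hvi)) hwj

lemma IsPathDecomp.isSepChain_bagsBefore_bagsFrom (hW : IsPathDecomp E Bs) :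
    IsSepChain E (fun α : Fin (r + 1) => bagsBefore Bs α) (fun α => bagsFrom Bs α) :=
  ⟨bagsBefore_zero, bagsFrom_zero hW.1, bagsBefore_of_le hW.1 le_rfl, bagsFrom_of_le le_rfl,
    fun α => hW.isSeparation_bagsBefore_bagsFrom α,
    fun _ _ hij => ⟨bagsBefore_mono hij, bagsFrom_antitone hij⟩⟩

lemma IsPathDecomp.ncard_bagsBefore_inter_bagsFrom_le [Finite V] (hW : IsPathDecomp E Bs)
    {p : ℕ} (hwidth : ∀ i, (Bs i).ncard - 1 ≤ p)
    (hcons : ∀ i j : Fin r, (j : ℕ) = (i : ℕ) + 1 → Bs i ≠ Bs j) (k : ℕ) :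
    (bagsBefore Bs k ∩ bagsFrom Bs k).ncard ≤ p := by
  rcases Nat.eq_zero_or_pos k with rfl | hk
  · simp [bagsBefore_zero]
  rcases le_or_gt r k with hrk | hkr
  · simp [bagsFrom_of_le hrk]
  let i : Fin r := ⟨k - 1, by omega⟩
  let j : Fin r := ⟨k, hkr⟩
  have hij : (j : ℕ) = i + 1 := by simp [i, j]; omega
  calc (bagsBefore Bs k ∩ bagsFrom Bs k).ncard
      ≤ (Bs i ∩ Bs j).ncard :=
        Set.ncard_le_ncard (bagsBefore_inter_bagsFrom_subset hW.2.1 hij) (Set.toFinite _)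
    _ ≤ p := Set.ncard_inter_le_of_ne (Set.toFinite _) (Set.toFinite _) (hcons i j hij)
        (hwidth i) (hwidth j)

end PathDecomposition

/-- A path decomposition of width at most `p` with no two consecutive bags
equal yields, via prefix/suffix unions, a separation chain of width at most `p`. -/
theorem stmt_2 {V : Type*} [Fintype V] (E : V → V → Prop) {r : ℕ} (Bs : Fin r → Set V)
    (hW : IsPathDecomp E Bs) (p : ℕ) (hwidth : ∀ i, (Bs i).ncard - 1 ≤ p)
    (hcons : ∀ i j : Fin r, (j : ℕ) = (i : ℕ) + 1 → Bs i ≠ Bs j) :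
    IsSepChain E
      (fun α : Fin (r + 1) => ⋃ (j : Fin r) (_ : (j : ℕ) < (α : ℕ)), Bs j)
      (fun α : Fin (r + 1) => ⋃ (j : Fin r) (_ : (α : ℕ) ≤ (j : ℕ)), Bs j) ∧
    ∀ α : Fin (r + 1),
      ((⋃ (j : Fin r) (_ : (j : ℕ) < (α : ℕ)), Bs j) ∩
        (⋃ (j : Fin r) (_ : (α : ℕ) ≤ (j : ℕ)), Bs j)).ncard ≤ p :=
  ⟨hW.isSepChain_bagsBefore_bagsFrom,
    fun α => hW.ncard_bagsBefore_inter_bagsFrom_le hwidth hcons α⟩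
end

section
/- Let ((A_0,B_0), …, (A_r,B_r)) be a separation chain in a finite digraph T. Then the sequence W = (W_1, …, W_r) defined by W_i = A_i ∩ B_{i−1} is a path decomposition of T of width equal to (max over 1 ≤ i ≤ r of |A_i ∩ B_{i−1}|) − 1. -/
/-!
Every vertex `v` lies in the bag `A (j+1) ∩ B j` of the step `j` at which it enters the left
sides of the chain (it is not in `A j`, so it is in `B j`). If `E u v` and `u` entered strictly
before `v`, then at `v`'s step `u ∈ A j` and `v ∈ B j \ A j`, so the separation forces `u ∈ B j`:
both ends lie in `v`'s bag. The width identity is just truncated subtraction commuting with a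
finite maximum.
-/

theorem Nat.iSup_sub {ι : Type*} [Finite ι] (f : ι → ℕ) (n : ℕ) :
    ⨆ i, (f i - n) = (⨆ i, f i) - n := by
  cases isEmpty_or_nonempty ι
  · simp
  · exact (Monotone.map_ciSup_of_continuousAt continuous_of_discreteTopology.continuousAt
      (fun _ _ h => Nat.sub_le_sub_right h n) (Set.finite_range f).bddAbove).symm

theorem Fin.exists_castSucc_not_succ {r : ℕ} {p : Fin (r + 1) → Prop} (h0 : ¬ p 0)
    (hlast : p (Fin.last r)) : ∃ j : Fin r, ¬ p j.castSucc ∧ p j.succ := by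
  induction r with
  | zero => exact absurd hlast h0
  | succ r ih =>
    by_cases hr : p (Fin.last r).castSucc
    · obtain ⟨j, hj⟩ := ih (p := fun i => p i.castSucc) h0 hr
      exact ⟨j.castSucc, hj⟩
    · exact ⟨Fin.last r, hr, hlast⟩

section SeparationChain

variable {V : Type*} {E : V → V → Prop}

theorem IsSeparation.mem_right_of_notMem_left {A B : Set V} (hs : IsSeparation E A B) {v : V}
    (hv : v ∉ A) : v ∈ B :=
  (hs.1 ▸ Set.mem_univ v : v ∈ A ∪ B).resolve_left hv

theorem IsSeparation.mem_right_of_arc {A B : Set V} (hs : IsSeparation E A B) {u v : V}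
    (huv : E u v) (hu : u ∈ A) (hv : v ∉ A) : u ∈ B := by
  by_contra huB
  exact hs.2 u ⟨hu, huB⟩ v ⟨hs.mem_right_of_notMem_left hv, hv⟩ huv

variable {r : ℕ} {A B : Fin (r + 1) → Set V}

theorem IsSepChain.isSeparation (hc : IsSepChain E A B) (i : Fin (r + 1)) :
    IsSeparation E (A i) (B i) :=
  hc.2.2.2.2.1 i

theorem IsSepChain.monotone_left (hc : IsSepChain E A B) : Monotone A :=
  fun i j hij => (hc.2.2.2.2.2 i j hij).1

theorem IsSepChain.antitone_right (hc : IsSepChain E A B) : Antitone B :=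
  fun i j hij => (hc.2.2.2.2.2 i j hij).2

theorem IsSepChain.exists_entry (hc : IsSepChain E A B) (v : V) :
    ∃ j : Fin r, v ∉ A j.castSucc ∧ v ∈ A j.succ :=
  Fin.exists_castSucc_not_succ (p := (v ∈ A ·)) (by simp [hc.1]) (by simp [hc.2.2.1])

theorem IsSepChain.mem_bag_of_entry (hc : IsSepChain E A B) {v : V} {j : Fin r}
    (hj : v ∉ A j.castSucc) (hj' : v ∈ A j.succ) : v ∈ A j.succ ∩ B j.castSucc :=
  ⟨hj', (hc.isSeparation _).mem_right_of_notMem_left hj⟩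

theorem IsSepChain.isPathDecomp (hc : IsSepChain E A B) :
    IsPathDecomp E (fun i : Fin r => A i.succ ∩ B i.castSucc) := by
  refine ⟨?_, ?_, ?_⟩
  · refine Set.eq_univ_of_forall fun v => ?_
    obtain ⟨j, hj, hj'⟩ := hc.exists_entry v
    exact Set.mem_iUnion.mpr ⟨j, hc.mem_bag_of_entry hj hj'⟩
  · rintro i j l hij hjl v ⟨⟨hvA, -⟩, -, hvB⟩
    exact ⟨hc.monotone_left (Fin.succ_le_succ_iff.mpr hij.le) hvA,
      hc.antitone_right (Fin.castSucc_le_castSucc_iff.mpr hjl.le) hvB⟩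
  · intro u v huv
    obtain ⟨ju, hu, hu'⟩ := hc.exists_entry u
    obtain ⟨jv, hv, hv'⟩ := hc.exists_entry v
    rcases lt_trichotomy jv ju with hlt | rfl | hlt
    · exact .inr ⟨ju, jv, hlt, hc.mem_bag_of_entry hu hu', hc.mem_bag_of_entry hv hv'⟩
    · exact .inl ⟨jv, hc.mem_bag_of_entry hu hu', hc.mem_bag_of_entry hv hv'⟩
    · have huA : u ∈ A jv.castSucc := hc.monotone_left (Fin.succ_le_castSucc_iff.mpr hlt) hu'
      exact .inl ⟨jv, ⟨hc.monotone_left (Fin.castSucc_le_succ jv) huA,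
        (hc.isSeparation _).mem_right_of_arc huv huA hv⟩, hc.mem_bag_of_entry hv hv'⟩

end SeparationChain

theorem stmt_3_general {V : Type*} (E : V → V → Prop) {r : ℕ}
    (A B : Fin (r + 1) → Set V) (hc : IsSepChain E A B) :
    IsPathDecomp E (fun i : Fin r => A i.succ ∩ B i.castSucc) ∧
    (⨆ i : Fin r, ((A i.succ ∩ B i.castSucc).ncard - 1)) =
      (⨆ i : Fin r, (A i.succ ∩ B i.castSucc).ncard) - 1 :=
  ⟨hc.isPathDecomp, Nat.iSup_sub _ 1⟩

/-- A separation chain yields a path decomposition whose bags are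
`W i = A i ∩ B (i-1)`, of width `max |A i ∩ B (i-1)| - 1`. -/
theorem stmt_3 {V : Type*} [Fintype V] (E : V → V → Prop) {r : ℕ}
    (A B : Fin (r + 1) → Set V) (hc : IsSepChain E A B) :
    IsPathDecomp E (fun i : Fin r => A i.succ ∩ B i.castSucc) ∧
    (⨆ i : Fin r, ((A i.succ ∩ B i.castSucc).ncard - 1)) =
      (⨆ i : Fin r, (A i.succ ∩ B i.castSucc).ncard) - 1 :=
  stmt_3_general E A B hc
end

section
/- If a finite digraph T contains a (dk, d)-short jungle for some integers d > 1 and k ≥ 0, then every simple digraph S with |V(S)| + |E(S)| ≤ k is topologically contained in T. -/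
/-! The vertices of `S` are placed injectively into the jungle and its arcs are routed one
at a time along jungle paths. Before routing an arc, at most `|V(S)| + (|E(S)| - 1)(d - 1) < dk`
vertices are blocked (branch vertices and interiors of earlier paths), so one of the `dk`
internally disjoint short paths between its ends avoids all of them. -/

section Routing

variable {V W : Type*}

lemma length_internals (p : List V) : (internals p).length = pathLen p - 1 := by
  simp [internals, pathLen]

lemma exists_forall_notMem_of_pairwise_disjoint {ι : Type*} [Fintype ι] (L : ι → List V)
    (hL : Pairwise fun i j => ∀ z ∈ L i, z ∉ L j) (S : Finset V)
    (hS : S.card < Fintype.card ι) : ∃ i, ∀ z ∈ L i, z ∉ S := by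
  by_contra! hhit
  choose f hfL hfS using hhit
  obtain ⟨i, -, j, -, hij, hf⟩ := Finset.exists_ne_map_eq_of_card_lt_of_maps_to
    (s := Finset.univ) (t := S) hS (f := f) fun i _ => hfS i
  exact hL hij _ (hfL i) (hf ▸ hfL j)

def RoutesArcs (E : V → V → Prop) (η : W → V) (d : ℕ) (F : Finset (W × W))
    (P : W × W → List V) : Prop :=
  (∀ a ∈ F, PathFrom E (η a.1) (η a.2) (P a) ∧ pathLen (P a) ≤ d) ∧
  (∀ a ∈ F, ∀ z ∈ internals (P a), z ∉ Set.range η) ∧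
  (F : Set (W × W)).Pairwise fun a b => ∀ z ∈ internals (P a), z ∉ internals (P b)

/-- The vertices a new path must avoid. -/
def blockedBy [Fintype W] [DecidableEq V] (η : W → V) (F : Finset (W × W))
    (P : W × W → List V) : Finset V :=
  Finset.univ.image η ∪ F.biUnion fun a => (internals (P a)).toFinset

variable {E : V → V → Prop} {η : W → V} {d : ℕ} {F : Finset (W × W)} {P : W × W → List V}

lemma routesArcs_empty : RoutesArcs E η d ∅ P := by
  simp [RoutesArcs]

lemma RoutesArcs.card_blockedBy_le [Fintype W] [DecidableEq V] (h : RoutesArcs E η d F P) :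
    (blockedBy η F P).card ≤ Fintype.card W + F.card * (d - 1) := by
  have hpaths : (F.biUnion fun a => (internals (P a)).toFinset).card ≤ F.card * (d - 1) := by
    refine Finset.card_biUnion_le.trans (Finset.sum_le_card_nsmul _ _ _ fun a ha => ?_)
    calc (internals (P a)).toFinset.card ≤ (internals (P a)).length := List.toFinset_card_le _
      _ = pathLen (P a) - 1 := length_internals _
      _ ≤ d - 1 := Nat.sub_le_sub_right (h.1 a ha).2 1
  calc (blockedBy η F P).card
      ≤ (Finset.univ.image η).card + (F.biUnion fun a => (internals (P a)).toFinset).card :=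
        Finset.card_union_le _ _
    _ ≤ Fintype.card W + F.card * (d - 1) := add_le_add Finset.card_image_le hpaths

lemma RoutesArcs.insert [Fintype W] [DecidableEq V] [DecidableEq W] (h : RoutesArcs E η d F P)
    {a : W × W} (ha : a ∉ F) {Q : List V} (hQ : PathFrom E (η a.1) (η a.2) Q)
    (hQd : pathLen Q ≤ d) (hQS : ∀ z ∈ internals Q, z ∉ blockedBy η F P) :
    RoutesArcs E η d (insert a F) (Function.update P a Q) := by
  obtain ⟨hpath, hbranch, hdisj⟩ := h
  have hold : ∀ b ∈ F, Function.update P a Q b = P b := fun b hb =>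
    Function.update_of_ne (ne_of_mem_of_not_mem hb ha) _ _
  have hQbranch : ∀ z ∈ internals Q, z ∉ Set.range η := by
    rintro z hz ⟨w, rfl⟩
    exact hQS _ hz (Finset.mem_union_left _ (Finset.mem_image_of_mem η (Finset.mem_univ w)))
  have hQold : ∀ b ∈ F, ∀ z ∈ internals Q, z ∉ internals (P b) := fun b hb z hz hzb =>
    hQS z hz (Finset.mem_union_right _ (Finset.mem_biUnion.2 ⟨b, hb, List.mem_toFinset.2 hzb⟩))
  refine ⟨?_, ?_, ?_⟩
  · simp only [Finset.forall_mem_insert, Function.update_self]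
    exact ⟨⟨hQ, hQd⟩, fun b hb => hold b hb ▸ hpath b hb⟩
  · simp only [Finset.forall_mem_insert, Function.update_self]
    exact ⟨hQbranch, fun b hb => hold b hb ▸ hbranch b hb⟩
  · rw [Finset.coe_insert, Set.pairwise_insert_of_notMem (by exact_mod_cast ha)]
    refine ⟨fun b hb c hc hbc => ?_, fun b hb => ?_⟩
    · dsimp only
      rw [hold b hb, hold c hc]
      exact hdisj hb hc hbc
    · rw [Function.update_self, hold b hb]
      exact ⟨hQold b hb, fun z hzb hz => hQold b hb z hz hzb⟩

lemma ShortJungle.exists_routesArcs [Fintype W] [DecidableEq V] [DecidableEq W] {X : Set V}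
    {k : ℕ} (hX : ShortJungle E (d * k) d X) (hd : 0 < d) (hη : Function.Injective η)
    (hηX : ∀ w, η w ∈ X) (A : Finset (W × W)) (hA : ∀ a ∈ A, a.1 ≠ a.2)
    (hk : Fintype.card W + A.card ≤ k) : ∃ P, RoutesArcs E η d A P := by
  refine Finset.induction_on' (motive := fun F => ∃ P, RoutesArcs E η d F P) A
    ⟨fun _ => [], routesArcs_empty⟩ fun a F haA hFA haF ⟨P, hP⟩ => ?_
  obtain ⟨Q, -, hQ, hQdisj⟩ :=
    hX.2 _ (hηX a.1) _ (hηX a.2) (hη.ne (hA a haA))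
  have hF : F.card + 1 ≤ A.card :=
    Finset.card_insert_of_notMem haF ▸ Finset.card_le_card (Finset.insert_subset haA hFA)
  have hblocked : (blockedBy η F P).card < Fintype.card (Fin (d * k)) := by
    rw [Fintype.card_fin]
    calc (blockedBy η F P).card ≤ Fintype.card W + F.card * (d - 1) := hP.card_blockedBy_le
      _ < d * (Fintype.card W + F.card + 1) := by
        obtain ⟨c, rfl⟩ : ∃ c, d = c + 1 := ⟨d - 1, by omega⟩
        simp only [add_tsub_cancel_right]
        nlinarith
      _ ≤ d * k := Nat.mul_le_mul_left d (by omega)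
  obtain ⟨i, hi⟩ := exists_forall_notMem_of_pairwise_disjoint (internals ∘ Q)
    (fun i j hij => hQdisj i j hij) _ hblocked
  exact ⟨_, hP.insert haF (hQ i).1 (hQ i).2 hi⟩

end Routing

/-- A digraph containing a `(dk, d)`-short jungle (`d > 1`) topologically
contains every simple digraph `S` with `|V(S)| + |E(S)| ≤ k`. -/
theorem stmt_4 {V W : Type*} [Fintype V] [Fintype W] (E : V → V → Prop)
    (d k : ℕ) (hd : 1 < d) (X : Set V) (hX : ShortJungle E (d * k) d X)
    (Eh : W → W → Prop) (hS : ∀ w : W, ¬ Eh w w)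
    (hsize : Fintype.card W + {p : W × W | Eh p.1 p.2}.ncard ≤ k) :
    TopContain Eh E := by
  classical
  set A := Finset.univ.filter fun p : W × W => Eh p.1 p.2
  have hmemA (u v : W) : (u, v) ∈ A ↔ Eh u v := by simp [A]
  have hcardA : {p : W × W | Eh p.1 p.2}.ncard = A.card := by
    rw [← Set.ncard_coe_finset, Finset.coe_filter]
    simp
  have hWX : Fintype.card W ≤ Fintype.card X := by
    rw [← Nat.card_eq_fintype_card (α := X), Nat.card_coe_set_eq]
    nlinarith [hX.1]
  obtain ⟨ι⟩ := Function.Embedding.nonempty_of_card_le hWX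
  have hη : Function.Injective fun w => (ι w : V) := Subtype.val_injective.comp ι.injective
  obtain ⟨P, hpath, hbranch, hdisj⟩ := hX.exists_routesArcs (by omega) hη (fun w => (ι w).2) A
    (fun a ha hloop => hS a.2 (hloop ▸ (hmemA a.1 a.2).1 ha)) (by omega)
  exact ⟨_, fun u v => P (u, v), hη, fun u v h => (hpath _ ((hmemA u v).2 h)).1,
    fun u v h => hbranch _ ((hmemA u v).2 h),
    fun u v u' v' h h' => hdisj ((hmemA u v).2 h) ((hmemA u' v').2 h')⟩
end

section
/- If a finite digraph T contains a (dk, d)-short immersion jungle for some integers d > 1 and k ≥ 0, then every simple digraph S with |V(S)| + |E(S)| ≤ k is immersed in T. -/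
/-! Map `S` injectively into the jungle and route its arcs one at a time. A routed arc uses
at most `d` arcs of `T`, so after fewer than `k` arcs of `S` have been routed at most `d(k-1)`
arcs of `T` are in use; each of these meets at most one of the `dk` pairwise arc-disjoint
short paths offered for the next arc of `S`, so one of those paths is still free. -/

section Routing

variable {V : Type*} {E : V → V → Prop}

def HasArcDisjointShortPaths (E : V → V → Prop) (m d : ℕ) (v w : V) : Prop :=
  ∃ P : Fin m → List V, (∀ i, PathFrom E v w (P i) ∧ pathLen (P i) ≤ d) ∧
    Pairwise fun i j => (arcsOf (P i)).Disjoint (arcsOf (P j))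

theorem length_arcsOf (p : List V) : (arcsOf p).length = pathLen p := by
  simp only [arcsOf, pathLen, List.length_zip, List.length_drop]
  omega

theorem pathFrom_singleton (v : V) : PathFrom E v v [v] :=
  ⟨⟨List.cons_ne_nil v [], List.nodup_singleton v, List.isChain_singleton v⟩, rfl, rfl⟩

theorem hasArcDisjointShortPaths_self (m d : ℕ) (v : V) : HasArcDisjointShortPaths E m d v v :=
  ⟨fun _ => [v], fun _ => ⟨pathFrom_singleton v, Nat.zero_le d⟩,
    fun _ _ _ _ ha _ => by simp [arcsOf] at ha⟩

theorem ShortImmersionJungle.hasArcDisjointShortPaths {m d : ℕ} {X : Set V}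
    (hX : ShortImmersionJungle E m d X) {v w : V} (hv : v ∈ X) (hw : w ∈ X) :
    HasArcDisjointShortPaths E m d v w := by
  obtain rfl | hvw := eq_or_ne v w
  · exact hasArcDisjointShortPaths_self m d v
  · obtain ⟨P, -, hshort, hdisj⟩ := hX.2 v hv w hw hvw
    exact ⟨P, hshort, fun i j hij a hai haj => hdisj i j hij a hai haj⟩

theorem exists_forall_notMem_of_card_lt {α ι : Type*} [Fintype ι] {L : ι → List α}
    (hL : Pairwise fun i j => (L i).Disjoint (L j)) {U : Finset α}
    (hU : U.card < Fintype.card ι) : ∃ i, ∀ a ∈ L i, a ∉ U := by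
  by_contra! hmeet
  choose a haL haU using hmeet
  have ha : Function.Injective a := fun i j hij => by
    by_contra hne
    exact hL hne (haL i) (hij ▸ haL j)
  have := Finset.card_le_card_of_injOn (s := Finset.univ) a (fun i _ => haU i) ha.injOn
  simp only [Finset.card_univ] at this
  omega

theorem exists_arcDisjoint_routing {m d : ℕ} (hd : 0 < d) (s : Finset (V × V))
    (hlink : ∀ p ∈ s, HasArcDisjointShortPaths E m d p.1 p.2) (hs : s.card * d ≤ m) :
    ∃ R : V × V → List V, (∀ p ∈ s, PathFrom E p.1 p.2 (R p) ∧ pathLen (R p) ≤ d) ∧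
      ∀ p ∈ s, ∀ q ∈ s, p ≠ q → (arcsOf (R p)).Disjoint (arcsOf (R q)) := by
  classical
  induction s using Finset.induction_on with
  | empty => exact ⟨fun _ => [], by simp, by simp⟩
  | @insert p s hp ih =>
    rw [Finset.card_insert_of_notMem hp] at hs
    obtain ⟨R, hRshort, hRdisj⟩ :=
      ih (fun q hq => hlink q (Finset.mem_insert_of_mem hq)) (by nlinarith)
    set U := s.biUnion fun q => (arcsOf (R q)).toFinset
    have hU : U.card < m := calc
      U.card ≤ ∑ q ∈ s, (arcsOf (R q)).toFinset.card := Finset.card_biUnion_le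
      _ ≤ s.card * d := by
        refine Finset.sum_le_card_nsmul _ _ _ fun q hq => ?_
        exact (List.toFinset_card_le _).trans ((length_arcsOf _).trans_le (hRshort q hq).2)
      _ < m := by nlinarith
    obtain ⟨P, hPshort, hPdisj⟩ := hlink p (Finset.mem_insert_self p s)
    obtain ⟨i, hi⟩ := exists_forall_notMem_of_card_lt hPdisj (by simpa using hU)
    have hnew : ∀ q ∈ s, (arcsOf (P i)).Disjoint (arcsOf (R q)) := fun q hq a ha hq' =>
      hi a ha (Finset.mem_biUnion.mpr ⟨q, hq, List.mem_toFinset.mpr hq'⟩)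
    have hR : ∀ q ∈ s, Function.update R p (P i) q = R q := fun q hq =>
      Function.update_of_ne (ne_of_mem_of_not_mem hq hp) _ _
    refine ⟨Function.update R p (P i), fun q hq => ?_, fun q hq q' hq' hqq' => ?_⟩
    · rcases Finset.mem_insert.mp hq with rfl | hqs
      · simpa using hPshort i
      · simpa [hR q hqs] using hRshort q hqs
    · rcases Finset.mem_insert.mp hq with rfl | hqs <;>
        rcases Finset.mem_insert.mp hq' with rfl | hqs'
      · exact absurd rfl hqq'
      · simpa [hR q' hqs'] using hnew q' hqs'
      · simpa [hR q hqs] using (hnew q hqs).symm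
      · simpa [hR q hqs, hR q' hqs'] using hRdisj q hqs q' hqs' hqq'

end Routing

theorem exists_injective_mem_of_card_le_ncard {α W : Type*} [Fintype W] {X : Set α}
    (h : Fintype.card W ≤ X.ncard) :
    ∃ η : W → α, Function.Injective η ∧ ∀ w, η w ∈ X := by
  obtain ⟨e⟩ : Nonempty (W ↪ X) := by
    rcases X.finite_or_infinite with hX | hX
    · have := hX.fintype
      rw [Set.ncard_eq_toFinset_card', Set.toFinset_card] at h
      exact Function.Embedding.nonempty_of_card_le h
    · have : IsEmpty W := Fintype.card_eq_zero_iff.mp (by simpa [hX.ncard] using h)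
      exact ⟨Function.Embedding.ofIsEmpty⟩
  exact ⟨fun w => e w, fun u v h => e.injective (Subtype.ext h), fun w => (e w).2⟩

theorem stmt_5_general {V W : Type*} [Fintype W] (E : V → V → Prop)
    (d k : ℕ) (hd : 1 < d) (X : Set V) (hX : ShortImmersionJungle E (d * k) d X)
    (Eh : W → W → Prop)
    (hsize : Fintype.card W + {p : W × W | Eh p.1 p.2}.ncard ≤ k) :
    Immerses Eh E := by
  classical
  have hWX : Fintype.card W ≤ X.ncard := calc
    Fintype.card W ≤ k := by omega
    _ ≤ d * k := Nat.le_mul_of_pos_left k (by omega)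
    _ ≤ X.ncard := hX.1
  obtain ⟨η, hη, hηX⟩ := exists_injective_mem_of_card_le_ncard hWX
  set A := {p : W × W | Eh p.1 p.2}
  set s := A.toFinset.image (Prod.map η η)
  have hs : s.card * d ≤ d * k := calc
    s.card * d ≤ A.ncard * d := by
      gcongr
      exact Finset.card_image_le.trans (Set.ncard_eq_toFinset_card' A).ge
    _ ≤ d * k := by
      rw [mul_comm]
      gcongr
      omega
  obtain ⟨R, hRshort, hRdisj⟩ := exists_arcDisjoint_routing (by omega) s
    (fun p hp => by
      obtain ⟨q, -, rfl⟩ := Finset.mem_image.mp hp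
      exact hX.hasArcDisjointShortPaths (hηX q.1) (hηX q.2)) hs
  have hmem {u v : W} (huv : Eh u v) : (η u, η v) ∈ s :=
    Finset.mem_image_of_mem (Prod.map η η) (Set.mem_toFinset.mpr huv : (u, v) ∈ A.toFinset)
  refine ⟨η, fun u v => R (η u, η v), hη, fun u v huv => (hRshort _ (hmem huv)).1, ?_⟩
  intro u v u' v' huv huv' hne a ha ha'
  refine hRdisj _ (hmem huv) _ (hmem huv') (fun h => hne ?_) ha ha'
  simp only [Prod.mk.injEq] at h ⊢
  exact ⟨hη h.1, hη h.2⟩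

/-- A digraph containing a `(dk, d)`-short immersion jungle (`d > 1`) admits
every simple digraph `S` with `|V(S)| + |E(S)| ≤ k` as an immersion. -/
theorem stmt_5 {V W : Type*} [Fintype V] [Fintype W] (E : V → V → Prop)
    (d k : ℕ) (hd : 1 < d) (X : Set V) (hX : ShortImmersionJungle E (d * k) d X)
    (Eh : W → W → Prop) (hS : ∀ w : W, ¬ Eh w w)
    (hsize : Fintype.card W + {p : W × W | Eh p.1 p.2}.ncard ≤ k) :
    Immerses Eh E :=
  stmt_5_general E d k hd X hX Eh hsize
end

section
/- Let T be a semi-complete digraph and k a nonnegative integer. If T contains a (k+1, k)-matching tangle, then the pathwidth of T is strictly greater than k. -/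
/-! In a path decomposition of width at most `k` let vertex `v` occupy the bags
`s v, …, t v`. An arc `u → w` forces `s w ≤ t u`, so `v` and its outneighbours all start
by `t v`, while in a semi-complete digraph `v` dominates every vertex ending before `s v`.
Hence the outdegree gap between `x ∈ X` and `y ∈ Y` makes at least `k + 2` intervals
meet `[s x, t y]`. Take `x` with the latest start and `y` with the earliest end: every bag
between `s x` and `t y` meets each matching arc `x' → f x'` and has only `k + 1` vertices,
so it consists of exactly one endpoint of each. Thus the intervals meeting `[s x, t y]`
all belong to matched vertices, at most one per matching arc: at most `k + 1` of them. -/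

open Set

/-- Vertex `v` occupies the interval `[s v, t v]`, and the head of every arc starts no
later than its tail ends: the shape of a path decomposition. -/
def IsIntervalModel {V ι : Type*} [LinearOrder ι] (E : V → V → Prop) (s t : V → ι) : Prop :=
  (∀ v, s v ≤ t v) ∧ ∀ u w, E u w → s w ≤ t u

def bagAt {V ι : Type*} [LinearOrder ι] (s t : V → ι) (p : ι) : Set V :=
  {v | s v ≤ p ∧ p ≤ t v}

theorem mem_bagAt {V ι : Type*} [LinearOrder ι] {s t : V → ι} {p : ι} {v : V} :
    v ∈ bagAt s t p ↔ s v ≤ p ∧ p ≤ t v :=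
  Iff.rfl

theorem IsPathDecomp.exists_isIntervalModel {V : Type*} {r : ℕ} {E : V → V → Prop}
    {Bs : Fin r → Set V} (h : IsPathDecomp E Bs) :
    ∃ s t : V → Fin r, IsIntervalModel E s t ∧ ∀ p, bagAt s t p = Bs p := by
  classical
  obtain ⟨hcov, hmono, harcs⟩ := h
  have hne : ∀ v, ({i | v ∈ Bs i} : Finset (Fin r)).Nonempty := fun v => by
    obtain ⟨i, hi⟩ := mem_iUnion.1 (hcov ▸ mem_univ v)
    exact ⟨i, by simpa using hi⟩
  set s : V → Fin r := fun v => ({i | v ∈ Bs i} : Finset _).min' (hne v)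
  set t : V → Fin r := fun v => ({i | v ∈ Bs i} : Finset _).max' (hne v)
  have hs : ∀ v i, v ∈ Bs i → s v ≤ i := fun v i hi => Finset.min'_le _ _ (by simpa using hi)
  have ht : ∀ v i, v ∈ Bs i → i ≤ t v := fun v i hi => Finset.le_max' _ _ (by simpa using hi)
  have hsmem : ∀ v, v ∈ Bs (s v) := fun v => by simpa using Finset.min'_mem _ (hne v)
  have htmem : ∀ v, v ∈ Bs (t v) := fun v => by simpa using Finset.max'_mem _ (hne v)
  refine ⟨s, t, ⟨fun v => hs v _ (htmem v), fun u w huw => ?_⟩, fun p => ?_⟩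
  · rcases harcs u w huw with ⟨i, hu, hw⟩ | ⟨i, j, hji, hu, hw⟩
    · exact (hs w i hw).trans (ht u i hu)
    · exact (hs w j hw).trans (hji.le.trans (ht u i hu))
  · ext v
    refine ⟨fun ⟨h1, h2⟩ => ?_, fun hv => ⟨hs v p hv, ht v p hv⟩⟩
    rcases h1.eq_or_lt with rfl | h1
    · exact hsmem v
    rcases h2.eq_or_lt with rfl | h2
    · exact htmem v
    exact hmono _ _ _ h1 h2 ⟨hsmem v, htmem v⟩

theorem exists_isPathDecomp_of_pathwidth_le {V : Type*} {E : V → V → Prop} {k : ℕ}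
    (h : pathwidth E ≤ k) :
    ∃ (r : ℕ) (Bs : Fin r → Set V), IsPathDecomp E Bs ∧ ∀ i, (Bs i).ncard ≤ k + 1 := by
  have hne : {p | ∃ (r : ℕ) (Bs : Fin r → Set V),
      IsPathDecomp E Bs ∧ ∀ i, (Bs i).ncard - 1 ≤ p}.Nonempty :=
    ⟨(univ : Set V).ncard, 1, fun _ => univ,
      ⟨iUnion_const _, fun _ _ _ _ _ => inter_subset_left,
        fun u v _ => Or.inl ⟨0, mem_univ u, mem_univ v⟩⟩,
      fun _ => Nat.sub_le _ _⟩
  obtain ⟨r, Bs, hdec, hwidth⟩ := Nat.sInf_mem hne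
  exact ⟨r, Bs, hdec, fun i => by have := hwidth i; unfold pathwidth at h; omega⟩

theorem Set.BijOn.subset_union_of_ncard_le {V : Type*} [Finite V] {X Y B : Set V}
    {f : V → V} (hf : BijOn f X Y) (hXY : Disjoint X Y) (hB : ∀ x ∈ X, x ∈ B ∨ f x ∈ B)
    (hcard : B.ncard ≤ Y.ncard) : B ⊆ X ∪ Y ∧ ∀ x ∈ X, x ∈ B → f x ∉ B := by
  classical
  set ψ : V → V := fun u => if u ∈ X then f u else u
  have hsurj : Y ⊆ ψ '' (B ∩ (X ∪ Y)) := fun y hy => by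
    obtain ⟨x, hx, rfl⟩ := hf.surjOn hy
    rcases hB x hx with hxB | hfxB
    · exact ⟨x, ⟨hxB, Or.inl hx⟩, if_pos hx⟩
    · exact ⟨f x, ⟨hfxB, Or.inr hy⟩, if_neg (hXY.notMem_of_mem_right hy)⟩
  have hSB : (B ∩ (X ∪ Y)).ncard ≤ B.ncard := ncard_le_ncard inter_subset_left
  have hYS : Y.ncard ≤ (ψ '' (B ∩ (X ∪ Y))).ncard := ncard_le_ncard hsurj
  have himage : (ψ '' (B ∩ (X ∪ Y))).ncard ≤ (B ∩ (X ∪ Y)).ncard := ncard_image_le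
  have hinj : InjOn ψ (B ∩ (X ∪ Y)) := injOn_of_ncard_image_eq (by omega)
  refine ⟨(eq_of_subset_of_ncard_le inter_subset_left (by omega)).symm.subset.trans
    inter_subset_right, fun x hx hxB hfxB => ?_⟩
  have hfx : f x ∉ X := hXY.notMem_of_mem_right (hf.mapsTo hx)
  have : x = f x := hinj ⟨hxB, Or.inl hx⟩ ⟨hfxB, Or.inr (hf.mapsTo hx)⟩
    (by simp only [ψ, if_pos hx, if_neg hfx])
  exact hfx (this ▸ hx)

namespace IsIntervalModel

variable {V ι : Type*} [LinearOrder ι] {E : V → V → Prop} {s t : V → ι}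

theorem outdeg_add_one_le [Finite V] (h : IsIntervalModel E s t) (hloop : ∀ v, ¬ E v v)
    (v : V) :
    outdeg E v + 1 ≤ {u | s u ≤ t v}.ncard := by
  rw [outdeg, ← ncard_insert_of_notMem (show v ∉ {w | E v w} from hloop v)]
  refine ncard_le_ncard ?_
  rintro u (rfl | hu)
  · exact h.1 u
  · exact h.2 v u hu

theorem ncard_lt_le_outdeg [Finite V] (h : IsIntervalModel E s t) (hT : SemiComplete E)
    (v : V) :
    {u | t u < s v}.ncard ≤ outdeg E v := by
  refine ncard_le_ncard fun u hu => ?_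
  have hne : v ≠ u := by rintro rfl; exact (h.1 v).not_gt hu
  exact (hT.2 v u hne).resolve_right fun huv => (h.2 u v huv).not_gt hu

theorem outdeg_add_one_le_outdeg_add [Finite V] (h : IsIntervalModel E s t)
    (hT : SemiComplete E) (x y : V) :
    outdeg E y + 1 ≤ outdeg E x + {u | s u ≤ t y ∧ s x ≤ t u}.ncard := by
  have hsplit : {u | s u ≤ t y} ⊆ {u | t u < s x} ∪ {u | s u ≤ t y ∧ s x ≤ t u} :=
    fun u hu => (lt_or_ge (t u) (s x)).imp id (fun h => ⟨hu, h⟩)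
  have := h.outdeg_add_one_le hT.1 y
  have := h.ncard_lt_le_outdeg hT x
  have := (ncard_le_ncard hsplit).trans (ncard_union_le _ _)
  omega

theorem mem_bagAt_or_mem_bagAt (h : IsIntervalModel E s t) {u w : V} (huw : E u w) {p : ι}
    (hu : s u ≤ p) (hw : p ≤ t w) : u ∈ bagAt s t p ∨ w ∈ bagAt s t p := by
  rcases le_or_gt p (t u) with hp | hp
  · exact Or.inl ⟨hu, hp⟩
  · exact Or.inr ⟨(h.2 u w huw).trans hp.le, hw⟩

theorem ncard_meeting_le [Finite V] (h : IsIntervalModel E s t) {X Y : Set V} {f : V → V}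
    (hf : BijOn f X Y) (hXY : Disjoint X Y) (hmatch : ∀ x ∈ X, E x (f x))
    (hwidth : ∀ p, (bagAt s t p).ncard ≤ Y.ncard) {a b : ι}
    (ha : ∀ x ∈ X, s x ≤ a) (hb : ∀ y ∈ Y, b ≤ t y) :
    {u | s u ≤ b ∧ a ≤ t u}.ncard ≤ Y.ncard := by
  classical
  rcases lt_or_ge b a with hba | hab
  · exact (ncard_le_ncard fun u hu => mem_bagAt.2 ⟨hu.1, hba.le.trans hu.2⟩).trans (hwidth b)
  have hbag : ∀ p, a ≤ p → p ≤ b →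
      bagAt s t p ⊆ X ∪ Y ∧ ∀ x ∈ X, x ∈ bagAt s t p → f x ∉ bagAt s t p :=
    fun p hap hpb => hf.subset_union_of_ncard_le hXY
      (fun x hx => h.mem_bagAt_or_mem_bagAt (hmatch x hx) ((ha x hx).trans hap)
        (hpb.trans (hb _ (hf.mapsTo hx))))
      (hwidth p)
  have hcover : ∀ u, s u ≤ b → a ≤ t u → u ∈ X ∪ Y := fun u hub hau =>
    (hbag (max a (s u)) (le_max_left _ _) (max_le hab hub)).1
      (mem_bagAt.2 ⟨le_max_right _ _, max_le hau (h.1 u)⟩)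
  have hnot_both : ∀ x ∈ X, a ≤ t x → s (f x) ≤ b → False := fun x hx hax hfxb =>
    (hbag (max a (s (f x))) (le_max_left _ _) (max_le hab hfxb)).2 x hx
      (mem_bagAt.2 ⟨(ha x hx).trans (le_max_left _ _), max_le hax (h.2 x _ (hmatch x hx))⟩)
      (mem_bagAt.2 ⟨le_max_right _ _, (max_le hab hfxb).trans (hb _ (hf.mapsTo hx))⟩)
  refine ncard_le_ncard_of_injOn (fun u => if u ∈ X then f u else u) ?_ ?_
  · rintro u ⟨hub, hau⟩
    by_cases hu : u ∈ X
    · simpa [hu] using hf.mapsTo hu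
    · simpa [hu] using (hcover u hub hau).resolve_left hu
  · rintro u ⟨hub, hau⟩ w ⟨hwb, haw⟩ huw
    by_cases hu : u ∈ X <;> by_cases hw : w ∈ X <;> simp only [hu, hw, if_true, if_false] at huw
    · exact hf.injOn hu hw huw
    · exact (hnot_both u hu hau (huw ▸ hwb)).elim
    · exact (hnot_both w hw haw (huw ▸ hub)).elim
    · exact huw

theorem not_matchingTangle [Finite V] (h : IsIntervalModel E s t) (hT : SemiComplete E)
    {k : ℕ} (hwidth : ∀ p, (bagAt s t p).ncard ≤ k + 1) (X Y : Set V) :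
    ¬ MatchingTangle E (k + 1) k X Y := by
  rintro ⟨hXY, hX, hY, ⟨f, hf, hmatch⟩, hdeg⟩
  obtain ⟨x, hx, hxmax⟩ := X.exists_max_image s X.toFinite (nonempty_of_ncard_ne_zero (by omega))
  obtain ⟨y, hy, hymin⟩ := Y.exists_min_image t Y.toFinite (nonempty_of_ncard_ne_zero (by omega))
  have hmany := h.outdeg_add_one_le_outdeg_add hT x y
  have hfew := h.ncard_meeting_le hf hXY hmatch (hY ▸ hwidth) hxmax hymin
  have := hdeg x hx y hy
  omega

end IsIntervalModel

/-- A semi-complete digraph containing a `(k+1, k)`-matching tangle has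
pathwidth greater than `k`. -/
theorem stmt_8 {V : Type*} [Fintype V] (E : V → V → Prop) (hT : SemiComplete E)
    (k : ℕ) (X Y : Set V) (hXY : MatchingTangle E (k + 1) k X Y) :
    k < pathwidth E := by
  by_contra! hle
  obtain ⟨r, Bs, hdec, hbags⟩ := exists_isPathDecomp_of_pathwidth_le hle
  obtain ⟨s, t, hmodel, hbags_eq⟩ := hdec.exists_isIntervalModel
  exact hmodel.not_matchingTangle hT (fun p => hbags_eq p ▸ hbags p) X Y hXY
end

section
/- Let T be a semi-complete digraph, k a positive integer, and let (X, Y) be a (5k, 3k)-matching tangle in T. Then Y contains a (k, 4)-short jungle, i.e., there is a subset Z ⊆ Y with |Z| ≥ k such that for every v, w ∈ Z there exist k paths from v to w of length at most 4 that are pairwise internally vertex-disjoint. -/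
open Set
open scoped Finset

def HasShortLinkage {V : Type*} (E : V → V → Prop) (k d : ℕ) (v w : V) : Prop :=
  ∃ P : Fin k → List V, Function.Injective P ∧
    (∀ i, PathFrom E v w (P i) ∧ pathLen (P i) ≤ d) ∧
    (∀ i j, i ≠ j → ∀ z ∈ internals (P i), z ∉ internals (P j))

theorem exists_injective_forall_mem_of_card_le_ncard {ι α : Type*} [Fintype ι] [Finite α]
    (A : ι → Set α) (hA : ∀ i, Fintype.card ι ≤ (A i).ncard) :
    ∃ f : ι → α, Function.Injective f ∧ ∀ i, f i ∈ A i := by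
  classical
  have := Fintype.ofFinite α
  obtain ⟨f, hf, hfA⟩ := (Finset.all_card_le_biUnion_card_iff_exists_injective
    fun i => (A i).toFinset).mp fun s => by
      rcases s.eq_empty_or_nonempty with rfl | ⟨i, hi⟩
      · simp
      calc #s ≤ Fintype.card ι := s.card_le_univ
        _ ≤ #(A i).toFinset := by rw [← ncard_eq_toFinset_card']; exact hA i
        _ ≤ #(s.biUnion fun i => (A i).toFinset) :=
          Finset.card_le_card (Finset.subset_biUnion_of_mem (fun i => (A i).toFinset) hi)
  exact ⟨f, hf, fun i => mem_toFinset.mp (hfA i)⟩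

theorem Finset.card_le_two_mul_add_one_of_inDegree_le {V : Type*} (E : V → V → Prop)
    [DecidableRel E] (M : Finset V) (hM : ∀ u ∈ M, ∀ v ∈ M, u ≠ v → E u v ∨ E v u) (k : ℕ)
    (hin : ∀ y ∈ M, #{u ∈ M | E u y} ≤ k) :
    #M ≤ 2 * k + 1 := by
  classical
  set arcs := M.offDiag.filter fun p => E p.1 p.2
  have harcs : #arcs ≤ k * #M := by
    refine Finset.card_le_mul_card_image_of_maps_to (f := Prod.snd)
      (fun p hp => (Finset.mem_offDiag.mp (Finset.mem_filter.mp hp).1).2.1) k fun y hy => ?_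
    refine (Finset.card_le_card_of_injOn Prod.fst ?_ ?_).trans (hin y hy)
    · intro p hp
      simp only [Finset.coe_filter, Finset.mem_filter, Finset.mem_offDiag, mem_ofPred_eq] at hp ⊢
      exact ⟨hp.1.1.1, hp.2 ▸ hp.1.2⟩
    · intro p hp q hq hpq
      simp only [Finset.coe_filter, mem_ofPred_eq] at hp hq
      exact Prod.ext hpq (hp.2.trans hq.2.symm)
  have hpairs : M.offDiag ⊆ arcs ∪ arcs.image Prod.swap := by
    rintro ⟨u, v⟩ huv
    obtain ⟨hu, hv, hne⟩ := Finset.mem_offDiag.mp huv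
    rcases hM u hu v hv hne with h | h
    · exact Finset.mem_union_left _ (by simp [arcs, hu, hv, hne, h])
    · refine Finset.mem_union_right _ (Finset.mem_image.mpr ⟨(v, u), ?_, rfl⟩)
      simp [arcs, hu, hv, Ne.symm hne, h]
  have hcount : #M * #M ≤ #M * (2 * k + 1) := by
    have h1 := Finset.card_le_card hpairs
    have h2 := Finset.card_union_le arcs (arcs.image Prod.swap)
    have h3 := Finset.card_image_le (f := Prod.swap) (s := arcs)
    rw [Finset.offDiag_card] at h1
    have : #M * #M ≤ 2 * (k * #M) + #M := by omega
    linarith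
  rcases Nat.eq_zero_or_pos #M with h | h
  · omega
  · exact Nat.le_of_mul_le_mul_left hcount h

theorem SemiComplete.ncard_setOf_ncard_inNbrs_le {V : Type*} [Finite V] {E : V → V → Prop}
    (hT : SemiComplete E) (Y : Set V) (k : ℕ) :
    {y ∈ Y | {u ∈ Y | E u y}.ncard ≤ k}.ncard ≤ 2 * k + 1 := by
  classical
  have := Fintype.ofFinite V
  rw [ncard_eq_toFinset_card']
  refine Finset.card_le_two_mul_add_one_of_inDegree_le E _ (fun u _ v _ => hT.2 u v) k
    fun y hy => ?_
  refine le_trans ?_ (mem_toFinset.mp hy).2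
  rw [ncard_eq_toFinset_card']
  exact Finset.card_le_card fun u hu => by
    simp only [Finset.mem_filter, mem_toFinset, mem_ofPred_eq] at hu ⊢
    exact ⟨hu.1.1, hu.2⟩

theorem SemiComplete.outdeg_sub_outdeg_sub_ncard_le {V : Type*} [Finite V]
    {E : V → V → Prop} (hT : SemiComplete E) {x v : V} {R : Set V} (hxR : x ∈ R) :
    outdeg E v - outdeg E x - R.ncard ≤ ({u | E v u ∧ E u x} \ R).ncard := by
  have hsub : {u | E v u} \ ({u | E x u} ∪ R) ⊆ {u | E v u ∧ E u x} \ R := by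
    rintro u ⟨hvu, hu⟩
    simp only [mem_union, mem_ofPred_eq, not_or] at hu
    have hux : u ≠ x := fun h => hu.2 (h ▸ hxR)
    exact ⟨⟨hvu, (hT.2 u x hux).resolve_right hu.1⟩, hu.2⟩
  calc outdeg E v - outdeg E x - R.ncard
      ≤ {u | E v u}.ncard - ({u | E x u} ∪ R).ncard := by
        have := ncard_union_le {u | E x u} R
        unfold outdeg
        omega
    _ ≤ ({u | E v u} \ ({u | E x u} ∪ R)).ncard := le_ncard_sdiff _ _
    _ ≤ _ := ncard_le_ncard hsub

theorem internals_cons_append_singleton {V : Type*} (v w : V) (Q : List V) :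
    internals (v :: Q ++ [w]) = Q := by
  simp [internals]

theorem hasShortLinkage_of_disjoint {V : Type*} {E : V → V → Prop} {k d : ℕ} {v w : V}
    (Q : Fin k → List V) (hpath : ∀ i, PathFrom E v w (v :: Q i ++ [w]))
    (hne : ∀ i, Q i ≠ []) (hlen : ∀ i, (Q i).length < d)
    (hdisj : ∀ i j, i ≠ j → (Q i).Disjoint (Q j)) :
    HasShortLinkage E k d v w := by
  refine ⟨fun i => v :: Q i ++ [w], fun i j hij => ?_, fun i => ⟨hpath i, ?_⟩, ?_⟩
  · by_contra hne'
    have hQ : Q i = Q j := by simpa using hij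
    obtain ⟨z, hz⟩ := List.exists_mem_of_ne_nil _ (hne i)
    exact hdisj i j hne' hz (hQ ▸ hz)
  · have := hlen i
    simp only [pathLen, List.length_append, List.length_cons, List.length_nil]
    omega
  · intro i j hij z hi hj
    rw [internals_cons_append_singleton] at hi hj
    exact hdisj i j hij hi hj

theorem MatchingTangle.exists_matched_inNbrs {V : Type*} [Finite V] {E : V → V → Prop}
    {m ℓ k : ℕ} {X Y : Set V} (hXY : MatchingTangle E m ℓ X Y) (v : V) {w : V}
    (hin : k < {u ∈ Y | E u w}.ncard) :
    ∃ b x : Fin k → V, Function.Injective b ∧ Function.Injective x ∧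
      ∀ i, b i ∈ Y ∧ E (b i) w ∧ b i ≠ v ∧ x i ∈ X ∧ E (x i) (b i) := by
  obtain ⟨-, -, -, ⟨f, hf, hfE⟩, -⟩ := hXY
  obtain ⟨b, hb, hbY⟩ := exists_injective_forall_mem_of_card_le_ncard
    (fun _ : Fin k => {u ∈ Y | E u w} \ {v}) fun _ => by
      have := pred_ncard_le_ncard_sdiff_singleton {u ∈ Y | E u w} v
      simp only [Fintype.card_fin]
      omega
  choose x hxX hfx using fun i => hf.surjOn (hbY i).1.1
  exact ⟨b, x, hb, fun i j h => hb (by rw [← hfx i, ← hfx j, h]),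
    fun i => ⟨(hbY i).1.1, (hbY i).1.2, (hbY i).2, hxX i, hfx i ▸ hfE _ (hxX i)⟩⟩

theorem MatchingTangle.hasShortLinkage {V : Type*} [Finite V] {E : V → V → Prop}
    (hT : SemiComplete E) {m k : ℕ} {X Y : Set V} (hXY : MatchingTangle E m (3 * k) X Y)
    {v w : V} (hv : v ∈ Y) (hw : w ∈ Y) (hvw : v ≠ w) (hin : k < {u ∈ Y | E u w}.ncard) :
    HasShortLinkage E k 4 v w := by
  obtain ⟨b, x, hb, hx, hbx⟩ := hXY.exists_matched_inNbrs v hin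
  choose hbY hbE hbv hxX hxb using hbx
  obtain ⟨hXY, -, -, -, hdeg⟩ := hXY
  have hR : (range x ∪ range b ∪ {w}).ncard ≤ 2 * k + 1 := by
    have h₁ := ncard_union_le (range x ∪ range b) {w}
    have h₂ := ncard_union_le (range x) (range b)
    rw [ncard_range_of_injective hx, ncard_range_of_injective hb, Nat.card_fin] at h₂
    rw [ncard_singleton] at h₁
    omega
  set R := range x ∪ range b ∪ {w}
  have hxR : ∀ i, x i ∈ R := fun i => mem_union_left _ (mem_union_left _ (mem_range_self i))
  obtain ⟨a, ha, haA⟩ := exists_injective_forall_mem_of_card_le_ncard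
    (fun i => {u | E v u ∧ E u (x i)} \ R) fun i => by
      have h₁ := hT.outdeg_sub_outdeg_sub_ncard_le (v := v) (hxR i)
      have h₂ := hdeg (x i) (hxX i) v hv
      simp only [Fintype.card_fin]
      omega
  have hxY : ∀ i, ∀ u ∈ Y, x i ≠ u := fun i u hu h =>
    disjoint_left.mp hXY (hxX i) (h ▸ hu)
  have haR : ∀ i, a i ∉ R := fun i => (haA i).2
  simp only [R, mem_union, mem_range, mem_singleton_iff, not_or, not_exists] at haR
  have hav : ∀ i, a i ≠ v := fun i h => hT.1 v (h ▸ (haA i).1.1)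
  have hbw : ∀ i, b i ≠ w := fun i h => hT.1 w (h ▸ hbE i)
  refine hasShortLinkage_of_disjoint (fun i => [a i, x i, b i])
    (fun i => ⟨⟨by simp, ?_, ?_⟩, rfl, rfl⟩) (fun i => by simp) (fun i => by simp)
    fun i j hij => ?_
  · simp only [List.cons_append, List.nil_append, List.nodup_cons, List.mem_cons,
      List.not_mem_nil, or_false, not_or, List.nodup_nil]
    grind
  · exact .cons_cons (haA i).1.1 <| .cons_cons (haA i).1.2 <|
      .cons_cons (hxb i) <| .cons_cons (hbE i) <| .singleton w
  · simp only [List.disjoint_cons_left, List.disjoint_cons_right, List.mem_cons,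
      List.not_mem_nil, or_false, not_or, List.disjoint_nil_left]
    grind [ha.ne hij, hx.ne hij, hb.ne hij]

theorem stmt_9_general {V : Type*} [Fintype V] (E : V → V → Prop) (hT : SemiComplete E)
    (k : ℕ) (X Y : Set V) (hXY : MatchingTangle E (5 * k) (3 * k) X Y) :
    ∃ Z : Set V, Z ⊆ Y ∧ ShortJungle E k 4 Z := by
  set Z := {y ∈ Y | k < {u ∈ Y | E u y}.ncard}
  have hYZ : Y \ Z = {y ∈ Y | {u ∈ Y | E u y}.ncard ≤ k} := by
    ext y
    simp [Z]
  have hZ : k ≤ Z.ncard := by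
    have h₁ := ncard_le_ncard_sdiff_add_ncard Y Z
    have h₂ := hT.ncard_setOf_ncard_inNbrs_le Y k
    rw [← hYZ] at h₂
    rw [hXY.2.2.1] at h₁
    omega
  exact ⟨Z, sep_subset _ _, hZ, fun v hv w hw hvw => hXY.hasShortLinkage hT hv.1 hw.1 hvw hw.2⟩

/-- If `(X, Y)` is a `(5k, 3k)`-matching tangle in a semi-complete digraph,
then `Y` contains a `(k, 4)`-short jungle. -/
theorem stmt_9 {V : Type*} [Fintype V] (E : V → V → Prop) (hT : SemiComplete E)
    (k : ℕ) (hk : 0 < k) (X Y : Set V) (hXY : MatchingTangle E (5 * k) (3 * k) X Y) :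
    ∃ Z : Set V, Z ⊆ Y ∧ ShortJungle E k 4 Z :=
  stmt_9_general E hT k X Y hXY
end

section
/- Let T be a semi-complete digraph and k a nonnegative integer. If T contains an (m+1)-backward tangle, where m = 100k² + 22k + 1, then the cutwidth of T is strictly greater than k. -/
/-!
Fix an ordering of width `w`. Counting the vertices before `v` shows that its position
differs from its outdegree by at most `w`: every earlier vertex is an outneighbour of `v` or sends
a forward arc into `v`, and every outneighbour of `v` is earlier or receives a forward arc from `v`.
Hence in a backward tangle `(X, Y)` every vertex of `X` sits at most `2w` places after the first
vertex of `Y`, so each arc from `X` to `Y` crosses the cut before that vertex, crosses the cut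
`2w + 1` places later, or lies inside the window of `2w + 1` vertices between them. There are
therefore at most `2w + (2w + 1)²` such arcs, which is fewer than `100k² + 22k + 2`
when `w ≤ k`.
-/

def arcsBetween {V : Type*} (E : V → V → Prop) (A B : Set V) : Set (V × V) :=
  {p | p.1 ∈ A ∧ p.2 ∈ B ∧ E p.1 p.2}

section Ordering

-- `(e.symm v : ℕ)` is the position of `v` in the ordering `e`; lemma names call it `pos`.
variable {V : Type*} [Fintype V] {E : V → V → Prop} (e : Fin (Fintype.card V) ≃ V)

variable (E) in
def cutArcs (α : ℕ) : Set (V × V) :=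
  arcsBetween E {v | (e.symm v : ℕ) < α} {v | ¬ (e.symm v : ℕ) < α}

variable {e} in
@[simp]
lemma mem_cutArcs {α : ℕ} {u v : V} :
    (u, v) ∈ cutArcs E e α ↔ (e.symm u : ℕ) < α ∧ ¬ (e.symm v : ℕ) < α ∧ E u v :=
  Iff.rfl

lemma ncard_cutArcs_le_orderWidth (α : ℕ) : (cutArcs E e α).ncard ≤ orderWidth E e := by
  rcases le_or_gt α (Fintype.card V) with hα | hα
  · exact le_ciSup (f := fun α : Fin (Fintype.card V + 1) => (cutArcs E e α).ncard)
      (Set.finite_range _).bddAbove ⟨α, Nat.lt_succ_of_le hα⟩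
  · have hempty : cutArcs E e α = ∅ :=
      Set.eq_empty_of_forall_notMem fun p hp => hp.2.1 ((e.symm p.2).2.trans hα)
    simp [hempty]

lemma ncard_pos_lt (v : V) : {u | (e.symm u : ℕ) < e.symm v}.ncard = e.symm v := by
  have hpreimage :
      {u | (e.symm u : ℕ) < e.symm v} = e.symm ⁻¹' ↑(Finset.Iio (e.symm v)) := by
    ext u
    simp only [Finset.coe_Iio, Set.mem_preimage, Set.mem_Iio]
    rfl
  rw [hpreimage, Set.ncard_preimage_of_injective_subset_range e.symm.injective (by simp),
    Set.ncard_coe_finset, Fin.card_Iio]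

lemma ncard_forward_outNeighbours_le (v : V) :
    {w | E v w ∧ (e.symm v : ℕ) < e.symm w}.ncard ≤ orderWidth E e :=
  (Set.ncard_le_ncard_of_injOn (fun w => (v, w))
    (fun w hw => mem_cutArcs.2 ⟨Nat.lt_succ_self _, by have := hw.2; omega, hw.1⟩)
    (fun _ _ _ _ h => (Prod.ext_iff.1 h).2)).trans
    (ncard_cutArcs_le_orderWidth e (e.symm v + 1))

lemma ncard_forward_inNeighbours_le (v : V) :
    {u | E u v ∧ (e.symm u : ℕ) < e.symm v}.ncard ≤ orderWidth E e :=
  (Set.ncard_le_ncard_of_injOn (fun u => (u, v))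
    (fun _ hu => mem_cutArcs.2 ⟨hu.2, lt_irrefl _, hu.1⟩)
    (fun _ _ _ _ h => (Prod.ext_iff.1 h).1)).trans
    (ncard_cutArcs_le_orderWidth e (e.symm v))

lemma outdeg_le_pos_add_orderWidth (hirr : ∀ v, ¬ E v v) (v : V) :
    outdeg E v ≤ e.symm v + orderWidth E e := by
  have hsub : {w | E v w} ⊆
      {u | (e.symm u : ℕ) < e.symm v} ∪ {w | E v w ∧ (e.symm v : ℕ) < e.symm w} := by
    intro w hw
    rcases lt_trichotomy (e.symm w : ℕ) (e.symm v) with h | h | h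
    · exact Or.inl h
    · obtain rfl := e.symm.injective (Fin.ext h)
      exact absurd hw (hirr w)
    · exact Or.inr ⟨hw, h⟩
  calc outdeg E v ≤ _ := Set.ncard_le_ncard hsub
    _ ≤ _ := Set.ncard_union_le _ _
    _ ≤ _ := by
      rw [ncard_pos_lt]
      exact Nat.add_le_add_left (ncard_forward_outNeighbours_le e v) _

lemma pos_le_outdeg_add_orderWidth (htot : ∀ v w : V, v ≠ w → E v w ∨ E w v) (v : V) :
    (e.symm v : ℕ) ≤ outdeg E v + orderWidth E e := by
  have hsub : {u | (e.symm u : ℕ) < e.symm v} ⊆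
      {w | E v w} ∪ {u | E u v ∧ (e.symm u : ℕ) < e.symm v} := by
    intro u hu
    have hne : v ≠ u := by rintro rfl; exact lt_irrefl (e.symm v : ℕ) hu
    exact (htot v u hne).imp id fun h => ⟨h, hu⟩
  calc (e.symm v : ℕ) = _ := (ncard_pos_lt e v).symm
    _ ≤ _ := Set.ncard_le_ncard hsub
    _ ≤ _ := Set.ncard_union_le _ _
    _ ≤ _ := Nat.add_le_add_left (ncard_forward_inNeighbours_le e v) _

lemma pos_le_pos_add_of_outdeg_le (hT : SemiComplete E) {x y : V}
    (h : outdeg E x ≤ outdeg E y) : (e.symm x : ℕ) ≤ e.symm y + 2 * orderWidth E e := by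
  have hx := pos_le_outdeg_add_orderWidth e hT.2 x
  have hy := outdeg_le_pos_add_orderWidth e hT.1 y
  omega

lemma ncard_arcsBetween_le_of_window {X Y : Set V} (j d : ℕ)
    (hX : ∀ x ∈ X, (e.symm x : ℕ) ≤ j + d) (hY : ∀ y ∈ Y, j ≤ (e.symm y : ℕ)) :
    (arcsBetween E X Y).ncard ≤ 2 * orderWidth E e + (d + 1) ^ 2 := by
  set W := {v | j ≤ (e.symm v : ℕ) ∧ (e.symm v : ℕ) ≤ j + d}
  have hW : W.ncard ≤ d + 1 :=
    calc W.ncard ≤ (Finset.Icc j (j + d) : Set ℕ).ncard :=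
          Set.ncard_le_ncard_of_injOn (fun v => (e.symm v : ℕ))
            (fun _ hv => Finset.mem_coe.2 (Finset.mem_Icc.2 hv))
            (fun _ _ _ _ h => e.symm.injective (Fin.ext h))
      _ = d + 1 := by rw [Set.ncard_coe_finset, Nat.card_Icc]; omega
  have hsub : arcsBetween E X Y ⊆ (cutArcs E e j ∪ cutArcs E e (j + d + 1)) ∪ W ×ˢ W := by
    rintro ⟨x, y⟩ ⟨hx, hy, hxy⟩
    have hx' := hX x hx
    have hy' := hY y hy
    by_cases h1 : (e.symm x : ℕ) < j
    · exact Or.inl (Or.inl (mem_cutArcs.2 ⟨h1, by omega, hxy⟩))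
    by_cases h2 : (e.symm y : ℕ) ≤ j + d
    · exact Or.inr (Set.mk_mem_prod ⟨by omega, hx'⟩ ⟨hy', h2⟩)
    · exact Or.inl (Or.inr (mem_cutArcs.2 ⟨by omega, by omega, hxy⟩))
  have hcut₁ := ncard_cutArcs_le_orderWidth (E := E) e j
  have hcut₂ := ncard_cutArcs_le_orderWidth (E := E) e (j + d + 1)
  calc (arcsBetween E X Y).ncard ≤ _ := Set.ncard_le_ncard hsub
    _ ≤ (cutArcs E e j).ncard + (cutArcs E e (j + d + 1)).ncard + W.ncard * W.ncard := by
        grw [Set.ncard_union_le, Set.ncard_union_le, Set.ncard_prod]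
    _ ≤ 2 * orderWidth E e + (d + 1) ^ 2 := by nlinarith [Nat.mul_le_mul hW hW]

lemma ncard_arcsBetween_le_of_outdeg_le (hT : SemiComplete E) {X Y : Set V}
    (hdeg : ∀ x ∈ X, ∀ y ∈ Y, outdeg E x ≤ outdeg E y) :
    (arcsBetween E X Y).ncard ≤ 2 * orderWidth E e + (2 * orderWidth E e + 1) ^ 2 := by
  rcases Y.eq_empty_or_nonempty with rfl | hY
  · simp [arcsBetween]
  obtain ⟨y₀, hy₀, hmin⟩ := Set.exists_min_image Y (fun y => (e.symm y : ℕ)) Y.toFinite hY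
  exact ncard_arcsBetween_le_of_window e _ _
    (fun x hx => pos_le_pos_add_of_outdeg_le e hT (hdeg x hx y₀ hy₀)) hmin

end Ordering

/-- A semi-complete digraph containing an `(m+1)`-backward tangle, where
`m = 100k² + 22k + 1`, has cutwidth greater than `k`. -/
theorem stmt_10 {V : Type*} [Fintype V] (E : V → V → Prop) (hT : SemiComplete E)
    (k : ℕ) (X Y : Set V)
    (hXY : BackwardTangle E ((100 * k ^ 2 + 22 * k + 1) + 1) X Y) :
    k < cutwidth E := by
  obtain ⟨-, -, hcard, hdeg⟩ := hXY
  have : Nonempty (Fin (Fintype.card V) ≃ V) := ⟨(Fintype.equivFin V).symm⟩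
  refine Nat.lt_of_succ_le (le_ciInf fun e => ?_)
  by_contra! hwidth
  have hbound := ncard_arcsBetween_le_of_outdeg_le e hT hdeg
  have hcard' : 100 * k ^ 2 + 22 * k + 2 ≤ (arcsBetween E X Y).ncard := hcard
  nlinarith
end
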